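/- arXiv:1404.6829 — 2 statements merged into one kernel-verified Lean document; each statement's English description precedes it below -/
import Mathlib

section
/- Let φ and ψ be non-constant relatively prime inner functions on the unit disc (every common inner divisor of φ and ψ is constant). If f is a star-cyclic vector of Q_φ, then M_ψ*f is also a star-cyclic vector of Q_φ. -/
/-!
Since `Mψ*` commutes with `Mz*`, it maps the star-cyclic hull `[f] = Q_φ` into
`K = [Mψ* f] ⊆ Q_φ`. A vector `r ∈ Q_φ ⊖ K` is then orthogonal to `Mψ* Q_φ`, i.e.
`ψ r ∈ Q_φᗮ = φ H²`. By Beurling's theorem the closed `Mz`-invariant subspace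
`{g | ψ g ∈ φ H²}` is `θ H²` for an inner `θ`; from `φ = θ u` and `ψ θ = φ v` we get `ψ = u v`,
so `u` is a common inner divisor, hence a nonzero constant, and `θ H² = φ H²`. Thus
`r ∈ φ H² ∩ Q_φ = 0`.

Beurling's theorem follows from the Wold decomposition of the pure isometry `Mz` once the
wandering subspace `N ⊖ z N` is known to be one-dimensional: for orthonormal wandering vectors
`w, u`, the product `w u` equals both `∑ uₙ zⁿ w` and `∑ wₙ zⁿ u`, which are orthogonal.
-/

open scoped ComplexConjugate

noncomputable section

namespace Rudin

/-- The open unit disc in `ℂ`. -/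
def disc : Set ℂ := Metric.ball 0 1

/-- The Hardy space `H²(𝔻)`, modeled as the space of square-summable
power-series coefficient sequences. -/
abbrev H2 : Type := lp (fun _ : ℕ => ℂ) 2

/-- Evaluation of an element of `H²(𝔻)` as a holomorphic function on the disc. -/
def H2.eval (f : H2) (z : ℂ) : ℂ := ∑' m : ℕ, (f : ℕ → ℂ) m * z ^ m

/-- `T` is the operator of multiplication by the function `φ` on `H²(𝔻)`. -/
def IsMulOp (φ : ℂ → ℂ) (T : H2 →L[ℂ] H2) : Prop :=
  ∀ f : H2, ∀ z ∈ disc, H2.eval (T f) z = φ z * H2.eval f z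

/-- `φ` is an inner function: bounded holomorphic on `𝔻`, multiplication by `φ`
maps `H²(𝔻)` into itself and is an isometry. -/
structure IsInner (φ : ℂ → ℂ) : Prop where
  diff : DifferentiableOn ℂ φ disc
  bdd : ∃ C : ℝ, ∀ z ∈ disc, ‖φ z‖ ≤ C
  mul_mem : ∀ h : H2, ∃ g : H2, ∀ z ∈ disc, H2.eval g z = φ z * H2.eval h z
  isom : ∀ h g : H2, (∀ z ∈ disc, H2.eval g z = φ z * H2.eval h z) → ‖g‖ = ‖h‖

/-- Divisibility of inner functions: `ψ = φ · θ` with `θ` inner. -/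
def InnerDvd (φ ψ : ℂ → ℂ) : Prop :=
  ∃ θ : ℂ → ℂ, IsInner θ ∧ ∀ z ∈ disc, ψ z = φ z * θ z

/-- The subset `φ H²(𝔻)` of `H²(𝔻)`. -/
def shiftedSet (φ : ℂ → ℂ) : Set H2 :=
  {g | ∃ h : H2, ∀ z ∈ disc, H2.eval g z = φ z * H2.eval h z}

/-- The quotient module `Q_φ = H²(𝔻) ⊖ φ H²(𝔻)`. -/
def Qsp (φ : ℂ → ℂ) : Submodule ℂ H2 := (Submodule.span ℂ (shiftedSet φ))ᗮ

/-- The Blaschke factor at `a ∈ 𝔻`. -/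
def blaschke (a z : ℂ) : ℂ := (z - a) / (1 - conj a * z)

/-- The smallest closed subspace of `H²(𝔻)` containing `f` and invariant under `Mz*`. -/
def starHull (Mz : H2 →L[ℂ] H2) (f : H2) : Submodule ℂ H2 :=
  sInf {K : Submodule ℂ H2 | IsClosed (K : Set H2) ∧ f ∈ K ∧
    ∀ x ∈ K, ContinuousLinearMap.adjoint Mz x ∈ K}

/-- `f` is a star-cyclic vector of the quotient module `Q`. -/
def StarCyclic (Mz : H2 →L[ℂ] H2) (Q : Submodule ℂ H2) (f : H2) : Prop :=
  f ∈ Q ∧ starHull Mz f = Q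

end Rudin

open scoped InnerProductSpace ENNReal

section Wold

variable {E : Type*} [NormedAddCommGroup E] [InnerProductSpace ℂ E]

lemma Submodule.eq_of_le_of_orthogonal_inf_eq_bot {K N : Submodule ℂ E}
    [K.HasOrthogonalProjection] (hKN : K ≤ N) (h : Kᗮ ⊓ N = ⊥) : K = N := by
  simpa [h] using K.sup_orthogonal_inf_of_hasOrthogonalProjection hKN

lemma Orthonormal.inner_linearIsometry_eq_zero [CompleteSpace E] {ι : Type*} {v : ι → E}
    (hv : Orthonormal ℂ v) {x : E} (hx : ∀ i, ⟪x, v i⟫_ℂ = 0) (c : lp (fun _ : ι => ℂ) 2) :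
    ⟪x, hv.orthogonalFamily.linearIsometry c⟫_ℂ = 0 := by
  have h := (hv.orthogonalFamily.hasSum_linearIsometry c).mapL (innerSL ℂ x)
  simp only [LinearIsometry.toSpanSingleton_apply, innerSL_apply_apply, inner_smul_right, hx,
    mul_zero] at h
  exact h.unique hasSum_zero

namespace LinearIsometry

lemma mul_apply (S T : E →ₗᵢ[ℂ] E) (x : E) : (S * T) x = S (T x) := rfl

def IsPure (T : E →ₗᵢ[ℂ] E) : Prop :=
  ∀ x : E, (∀ n : ℕ, ∃ y, (T ^ n) y = x) → x = 0

def wanderingSubspace (T : E →ₗᵢ[ℂ] E) (N : Submodule ℂ E) : Submodule ℂ E :=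
  N ⊓ (N.map T.toLinearMap)ᗮ

variable {T : E →ₗᵢ[ℂ] E} {N : Submodule ℂ E}

lemma IsPure.eq_zero_of_forall_exists_apply_eq (hT : T.IsPure) {M : Set E}
    (hM : ∀ x ∈ M, ∃ y ∈ M, T y = x) {x : E} (hx : x ∈ M) : x = 0 := by
  have hpow : ∀ n : ℕ, ∀ x ∈ M, ∃ y ∈ M, (T ^ n) y = x := by
    intro n
    induction n with
    | zero => exact fun x hx => ⟨x, hx, rfl⟩
    | succ n ih =>
      intro x hx
      obtain ⟨y, hyM, rfl⟩ := ih x hx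
      obtain ⟨y', hy'M, rfl⟩ := hM y hyM
      exact ⟨y', hy'M, by rw [pow_succ, LinearIsometry.mul_apply]⟩
  exact hT x fun n => (hpow n x hx).imp fun _ hy => hy.2

lemma pow_apply_mem (hTN : ∀ x ∈ N, T x ∈ N) (n : ℕ) {x : E} (hx : x ∈ N) : (T ^ n) x ∈ N := by
  induction n with
  | zero => exact hx
  | succ n ih => rw [pow_succ', LinearIsometry.mul_apply]; exact hTN _ ih

lemma inner_apply_eq_zero_of_mem_wanderingSubspace {w : E} (hw : w ∈ wanderingSubspace T N)
    {x : E} (hx : x ∈ N) : ⟪w, T x⟫_ℂ = 0 :=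
  (Submodule.mem_orthogonal' _ _).mp (Submodule.mem_inf.mp hw).2 _ (Submodule.mem_map_of_mem hx)

lemma inner_pow_apply_pow_apply (hTN : ∀ x ∈ N, T x ∈ N) {w w' : E}
    (hw : w ∈ wanderingSubspace T N) (hw' : w' ∈ wanderingSubspace T N) (i j : ℕ) :
    ⟪(T ^ i) w, (T ^ j) w'⟫_ℂ = if i = j then ⟪w, w'⟫_ℂ else 0 := by
  have hshift : ∀ {a b : E}, a ∈ wanderingSubspace T N → b ∈ wanderingSubspace T N →
      ∀ k : ℕ, ⟪a, (T ^ (k + 1)) b⟫_ℂ = 0 := fun ha hb k => by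
    rw [pow_succ', LinearIsometry.mul_apply]
    exact inner_apply_eq_zero_of_mem_wanderingSubspace ha
      (pow_apply_mem hTN k (Submodule.mem_inf.mp hb).1)
  rcases lt_trichotomy i j with hij | rfl | hij
  · obtain ⟨k, rfl⟩ := Nat.exists_eq_add_of_lt hij
    rw [if_neg hij.ne, add_assoc, pow_add, LinearIsometry.mul_apply, inner_map_map,
      hshift hw hw']
  · rw [if_pos rfl, inner_map_map]
  · obtain ⟨k, rfl⟩ := Nat.exists_eq_add_of_lt hij
    rw [if_neg hij.ne', add_assoc, pow_add, LinearIsometry.mul_apply, inner_map_map,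
      ← inner_conj_symm, hshift hw' hw, map_zero]

lemma orthonormal_pow_apply (hTN : ∀ x ∈ N, T x ∈ N) {w : E}
    (hw : w ∈ wanderingSubspace T N) (hw1 : ‖w‖ = 1) : Orthonormal ℂ fun n => (T ^ n) w := by
  rw [orthonormal_iff_ite]
  intro i j
  rw [inner_pow_apply_pow_apply hTN hw hw, inner_self_eq_norm_sq_to_K, hw1]
  simp

variable [CompleteSpace E]

lemma isClosed_map (hN : IsClosed (N : Set E)) : IsClosed (N.map T.toLinearMap : Set E) := by
  rw [Submodule.map_coe]
  exact T.isometry.isClosedEmbedding.isClosedMap _ hN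

lemma sup_wanderingSubspace (hN : IsClosed (N : Set E)) (hTN : ∀ x ∈ N, T x ∈ N) :
    N.map T.toLinearMap ⊔ wanderingSubspace T N = N := by
  have : CompleteSpace (N.map T.toLinearMap) := (isClosed_map hN).completeSpace_coe
  rw [wanderingSubspace, inf_comm]
  exact Submodule.sup_orthogonal_inf_of_hasOrthogonalProjection
    (Submodule.map_le_iff_le_comap.mpr hTN)

lemma IsPure.wanderingSubspace_ne_bot (hT : T.IsPure) (hN : IsClosed (N : Set E))
    (hTN : ∀ x ∈ N, T x ∈ N) (hN0 : N ≠ ⊥) : wanderingSubspace T N ≠ ⊥ := by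
  intro hW
  have hmap := sup_wanderingSubspace hN hTN
  rw [hW, sup_bot_eq] at hmap
  refine hN0 ((Submodule.eq_bot_iff N).mpr fun x hx => hT.eq_zero_of_forall_exists_apply_eq
    (M := N) (fun x hx => ?_) hx)
  rw [← hmap] at hx
  exact Submodule.mem_map.mp hx

/-- Each such `x` is `T y` for some `y` of the same kind, so purity forces `x = 0`. -/
lemma IsPure.eq_zero_of_forall_inner_pow_apply_eq_zero (hT : T.IsPure)
    (hN : IsClosed (N : Set E)) (hTN : ∀ x ∈ N, T x ∈ N) {w : E}
    (hw : w ∈ wanderingSubspace T N) (hW : ∀ r ∈ wanderingSubspace T N, ⟪w, r⟫_ℂ = 0 → r = 0)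
    {x : E} (hxN : x ∈ N) (hx : ∀ n : ℕ, ⟪(T ^ n) w, x⟫_ℂ = 0) : x = 0 := by
  refine hT.eq_zero_of_forall_exists_apply_eq (M := {x | x ∈ N ∧ ∀ n : ℕ, ⟪(T ^ n) w, x⟫_ℂ = 0})
    (fun x ⟨hxN, hx⟩ => ?_) ⟨hxN, hx⟩
  rw [← sup_wanderingSubspace hN hTN] at hxN
  obtain ⟨p, hp, r, hr, rfl⟩ := Submodule.mem_sup.mp hxN
  obtain ⟨y, hy, rfl⟩ : ∃ y ∈ N, T y = p := Submodule.mem_map.mp hp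
  have hr0 : r = 0 := hW r hr <| by
    have hx0 := hx 0
    rwa [pow_zero, LinearIsometry.one_def, LinearIsometry.id_apply, inner_add_right,
      inner_apply_eq_zero_of_mem_wanderingSubspace hw hy, zero_add] at hx0
  subst hr0
  refine ⟨y, ⟨hy, fun n => ?_⟩, (add_zero _).symm⟩
  have hxn := hx (n + 1)
  rwa [add_zero, pow_succ', LinearIsometry.mul_apply, inner_map_map] at hxn

lemma IsPure.range_linearIsometry_eq (hT : T.IsPure) (hN : IsClosed (N : Set E))
    (hTN : ∀ x ∈ N, T x ∈ N) {w : E} (hw : w ∈ wanderingSubspace T N)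
    (hW : ∀ r ∈ wanderingSubspace T N, ⟪w, r⟫_ℂ = 0 → r = 0)
    (hv : Orthonormal ℂ fun n => (T ^ n) w) :
    LinearMap.range hv.orthogonalFamily.linearIsometry.toLinearMap = N := by
  have hwN : ∀ n, (T ^ n) w ∈ N := fun n => pow_apply_mem hTN n (Submodule.mem_inf.mp hw).1
  have : CompleteSpace (LinearMap.range hv.orthogonalFamily.linearIsometry.toLinearMap) := by
    rw [hv.orthogonalFamily.range_linearIsometry]
    exact (Submodule.isClosed_topologicalClosure _).completeSpace_coe
  refine Submodule.eq_of_le_of_orthogonal_inf_eq_bot ?_ ?_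
  · rw [hv.orthogonalFamily.range_linearIsometry]
    refine Submodule.topologicalClosure_minimal _ (iSup_le fun n => ?_) hN
    rintro _ ⟨a, rfl⟩
    exact N.smul_mem a (hwN n)
  · refine (Submodule.eq_bot_iff _).mpr fun x ⟨hxK, hxN⟩ =>
      hT.eq_zero_of_forall_inner_pow_apply_eq_zero hN hTN hw hW hxN fun n => ?_
    classical
    refine (Submodule.mem_orthogonal _ _).mp hxK _ ⟨lp.single 2 n 1, ?_⟩
    simp

end LinearIsometry

end Wold

namespace Rudin

lemma mem_disc_iff {z : ℂ} : z ∈ disc ↔ ‖z‖ < 1 := mem_ball_zero_iff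

lemma norm_coeff_le (f : H2) (n : ℕ) : ‖f n‖ ≤ ‖f‖ :=
  lp.norm_apply_le_norm two_ne_zero f n

lemma summable_coeff_mul_pow (f : H2) {z : ℂ} (hz : z ∈ disc) :
    Summable fun n => f n * z ^ n := by
  refine .of_norm <| .of_nonneg_of_le (fun n => norm_nonneg _) (fun n => ?_)
    ((summable_geometric_of_lt_one (norm_nonneg z) (mem_disc_iff.mp hz)).mul_left ‖f‖)
  rw [norm_mul, norm_pow]
  exact mul_le_mul_of_nonneg_right (norm_coeff_le f n) (by positivity)

lemma memℓp_conj_pow {z : ℂ} (hz : z ∈ disc) : Memℓp (fun n : ℕ => conj z ^ n) 2 := by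
  refine memℓp_gen ?_
  have hz' := mem_disc_iff.mp hz
  convert summable_geometric_of_lt_one (by positivity : 0 ≤ ‖z‖ ^ 2) (by nlinarith [norm_nonneg z])
    using 2 with n
  rw [ENNReal.toReal_ofNat, Real.rpow_two, norm_pow, RCLike.norm_conj, ← pow_mul, pow_mul']

open Classical in
/-- The reproducing kernel of `H²` at `z` (junk value `0` off the disc). -/
def kernel (z : ℂ) : H2 :=
  if hz : z ∈ disc then ⟨fun n => conj z ^ n, memℓp_conj_pow hz⟩ else 0

lemma eval_eq_inner (f : H2) {z : ℂ} (hz : z ∈ disc) : H2.eval f z = ⟪kernel z, f⟫_ℂ := by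
  rw [lp.inner_eq_tsum, H2.eval, kernel, dif_pos hz]
  refine tsum_congr fun n => ?_
  simp [mul_comm]

lemma eval_add (f g : H2) {z : ℂ} (hz : z ∈ disc) :
    H2.eval (f + g) z = H2.eval f z + H2.eval g z := by
  simp only [eval_eq_inner _ hz, inner_add_right]

lemma eval_sub (f g : H2) {z : ℂ} (hz : z ∈ disc) :
    H2.eval (f - g) z = H2.eval f z - H2.eval g z := by
  simp only [eval_eq_inner _ hz, inner_sub_right]

lemma eval_smul (c : ℂ) (f : H2) {z : ℂ} (hz : z ∈ disc) :
    H2.eval (c • f) z = c * H2.eval f z := by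
  simp only [eval_eq_inner _ hz, inner_smul_right]

lemma eval_zero (z : ℂ) : H2.eval 0 z = 0 := by
  simp [H2.eval]

lemma eball_zero_one : Metric.eball (0 : ℂ) 1 = disc := by
  simpa [disc] using Metric.eball_coe (x := (0 : ℂ)) (ε := 1)

open FormalMultilinearSeries in
lemma hasFPowerSeriesOnBall_eval (f : H2) :
    HasFPowerSeriesOnBall (H2.eval f) (ofScalars ℂ (f : ℕ → ℂ)) 0 1 where
  r_le := by
    refine ENNReal.le_of_forall_nnreal_lt fun r hr => le_radius_of_bound _ ‖f‖ fun n => ?_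
    rw [ofScalars_norm]
    calc ‖f n‖ * (r : ℝ) ^ n ≤ ‖f n‖ * 1 := by
          gcongr
          exact pow_le_one₀ r.coe_nonneg (mod_cast hr.le)
      _ ≤ ‖f‖ := by rw [mul_one]; exact norm_coeff_le f n
  r_pos := one_pos
  hasSum {y} hy := by
    rw [eball_zero_one] at hy
    simpa [ofScalars_apply_eq, H2.eval, mul_comm] using (summable_coeff_mul_pow f hy).hasSum

lemma analyticOnNhd_eval (f : H2) : AnalyticOnNhd ℂ (H2.eval f) disc := fun z hz =>
  (hasFPowerSeriesOnBall_eval f).analyticAt_of_mem (by rwa [eball_zero_one])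

lemma eq_zero_of_eval_eq_zero {f : H2} (h : ∀ z ∈ disc, H2.eval f z = 0) : f = 0 := by
  have hzero := (hasFPowerSeriesOnBall_eval f).hasFPowerSeriesAt.eq_zero_of_eventually
    (Filter.eventually_of_mem (Metric.ball_mem_nhds 0 one_pos) h)
  rw [FormalMultilinearSeries.ofScalars_series_eq_zero] at hzero
  exact lp.ext hzero

lemma ext_eval {f g : H2} (h : ∀ z ∈ disc, H2.eval f z = H2.eval g z) : f = g :=
  sub_eq_zero.mp <| eq_zero_of_eval_eq_zero fun z hz => by rw [eval_sub f g hz, h z hz, sub_self]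

lemma exists_eval_ne_zero {f : H2} (hf : f ≠ 0) : ∃ z ∈ disc, H2.eval f z ≠ 0 := by
  contrapose! hf
  exact eq_zero_of_eval_eq_zero hf

def one : H2 := lp.single 2 0 1

lemma eval_one {z : ℂ} (hz : z ∈ disc) : H2.eval one z = 1 := by
  classical
  rw [eval_eq_inner _ hz, one, lp.inner_single_right, kernel, dif_pos hz]
  simp

lemma norm_one : ‖one‖ = 1 := by
  rw [one, lp.norm_single (by norm_num), NormOneClass.norm_one]

lemma eqOn_of_mul_eqOn {a F G : ℂ → ℂ} (ha : AnalyticOnNhd ℂ a disc)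
    (hF : AnalyticOnNhd ℂ F disc) (hG : AnalyticOnNhd ℂ G disc) (ha0 : ∃ z ∈ disc, a z ≠ 0)
    (h : ∀ z ∈ disc, a z * F z = a z * G z) : ∀ z ∈ disc, F z = G z := by
  obtain ⟨z₀, hz₀, hz₀0⟩ := ha0
  have hzero := ha.eq_zero_or_eq_zero_of_mul_eq_zero (hF.sub hG)
    (fun z hz => by rw [Pi.sub_apply, mul_sub, h z hz, sub_self]) (convex_ball 0 1).isPreconnected
  exact fun z hz => sub_eq_zero.mp ((hzero.resolve_left fun h0 => hz₀0 (h0 z₀ hz₀)) z hz)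

def mulSubmodule (φ : ℂ → ℂ) : Submodule ℂ H2 where
  carrier := shiftedSet φ
  zero_mem' := ⟨0, fun z _ => by rw [eval_zero, mul_zero]⟩
  add_mem' := by
    rintro f g ⟨a, ha⟩ ⟨b, hb⟩
    exact ⟨a + b, fun z hz => by rw [eval_add _ _ hz, eval_add _ _ hz, ha z hz, hb z hz]; ring⟩
  smul_mem' := by
    rintro c f ⟨a, ha⟩
    exact ⟨c • a, fun z hz => by rw [eval_smul _ _ hz, eval_smul _ _ hz, ha z hz]; ring⟩

lemma Qsp_eq_orthogonal (φ : ℂ → ℂ) : Qsp φ = (mulSubmodule φ)ᗮ := by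
  rw [Qsp, show shiftedSet φ = (mulSubmodule φ : Set H2) from rfl, Submodule.span_eq]

section MulOp

variable {φ χ ξ : ℂ → ℂ} {T S : H2 →L[ℂ] H2}

lemma IsMulOp.commute (hT : IsMulOp χ T) (hS : IsMulOp ξ S) : Commute T S :=
  ContinuousLinearMap.ext fun f => ext_eval fun z hz => by
    change H2.eval (T (S f)) z = H2.eval (S (T f)) z
    rw [hT _ z hz, hS _ z hz, hS _ z hz, hT _ z hz]
    ring

lemma IsMulOp.apply_mem_mulSubmodule (hT : IsMulOp χ T) {g : H2} (hg : g ∈ mulSubmodule φ) :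
    T g ∈ mulSubmodule φ := by
  obtain ⟨h, hh⟩ := hg
  exact ⟨T h, fun z hz => by rw [hT _ z hz, hh z hz, hT _ z hz]; ring⟩

lemma IsMulOp.adjoint_mem_Qsp (hT : IsMulOp χ T) {x : H2} (hx : x ∈ Qsp φ) :
    T.adjoint x ∈ Qsp φ := by
  rw [Qsp_eq_orthogonal] at hx ⊢
  intro g hg
  rw [ContinuousLinearMap.adjoint_inner_right]
  exact hx _ (hT.apply_mem_mulSubmodule hg)

lemma IsMulOp.norm_map (hT : IsMulOp φ T) (hφ : IsInner φ) (f : H2) : ‖T f‖ = ‖f‖ :=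
  hφ.isom f (T f) (hT f)

end MulOp

namespace IsInner

variable {φ ψ θ : ℂ → ℂ}

lemma norm_le_one_of_isometric_mul {η : ℂ → ℂ}
    (H : ∀ h : H2, ∃ g : H2, (∀ z ∈ disc, H2.eval g z = η z * H2.eval h z) ∧ ‖g‖ = ‖h‖)
    {z : ℂ} (hz : z ∈ disc) : ‖η z‖ ≤ 1 := by
  obtain ⟨g, hg, hgn⟩ := H (kernel z)
  have hk : 0 < ‖kernel z‖ := by
    refine norm_pos_iff.mpr fun h0 => ?_
    have h1 := eval_one hz
    rw [eval_eq_inner _ hz, h0, inner_zero_left] at h1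
    exact zero_ne_one h1
  have hbound : ‖η z‖ * ‖kernel z‖ ^ 2 ≤ 1 * ‖kernel z‖ ^ 2 :=
    calc ‖η z‖ * ‖kernel z‖ ^ 2 = ‖⟪kernel z, g⟫_ℂ‖ := by
          rw [← eval_eq_inner _ hz, hg z hz, eval_eq_inner _ hz, inner_self_eq_norm_sq_to_K,
            norm_mul, norm_pow]
          simp
      _ ≤ ‖kernel z‖ * ‖g‖ := norm_inner_le_norm _ _
      _ = 1 * ‖kernel z‖ ^ 2 := by rw [hgn]; ring
  exact le_of_mul_le_mul_right hbound (by positivity)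

/-- An alternative constructor: boundedness and holomorphy are automatic. -/
lemma mk' {η : ℂ → ℂ}
    (H : ∀ h : H2, ∃ g : H2, (∀ z ∈ disc, H2.eval g z = η z * H2.eval h z) ∧ ‖g‖ = ‖h‖) :
    IsInner η where
  diff := by
    obtain ⟨g, hg, -⟩ := H one
    exact (analyticOnNhd_eval g).differentiableOn.congr fun z hz => by
      rw [hg z hz, eval_one hz, mul_one]
  bdd := ⟨1, fun z hz => norm_le_one_of_isometric_mul H hz⟩
  mul_mem h := (H h).imp fun _ hg => hg.1
  isom h g hg := by
    obtain ⟨g', hg', hn⟩ := H h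
    rw [ext_eval fun z hz => (hg z hz).trans (hg' z hz).symm, hn]

lemma analyticOnNhd (hφ : IsInner φ) : AnalyticOnNhd ℂ φ disc :=
  hφ.diff.analyticOnNhd Metric.isOpen_ball

lemma exists_eval_eq (hφ : IsInner φ) : ∃ g : H2, g ≠ 0 ∧ ∀ z ∈ disc, H2.eval g z = φ z := by
  obtain ⟨g, hg⟩ := hφ.mul_mem one
  refine ⟨g, fun hg0 => ?_, fun z hz => by rw [hg z hz, eval_one hz, mul_one]⟩
  have h1 := hφ.isom one g hg
  rw [hg0, _root_.norm_zero, norm_one] at h1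
  exact zero_ne_one h1

lemma exists_ne_zero (hφ : IsInner φ) : ∃ z ∈ disc, φ z ≠ 0 := by
  obtain ⟨g, hg0, hg⟩ := hφ.exists_eval_eq
  obtain ⟨z, hz, hgz⟩ := exists_eval_ne_zero hg0
  exact ⟨z, hz, hg z hz ▸ hgz⟩

lemma mulSubmodule_ne_bot (hφ : IsInner φ) : mulSubmodule φ ≠ ⊥ := by
  obtain ⟨g, hg0, hg⟩ := hφ.exists_eval_eq
  exact (Submodule.ne_bot_iff _).mpr
    ⟨g, ⟨one, fun z hz => by rw [hg z hz, eval_one hz, mul_one]⟩, hg0⟩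

lemma mul (hφ : IsInner φ) (hψ : IsInner ψ) : IsInner fun z => φ z * ψ z :=
  mk' fun h => by
    obtain ⟨g, hg⟩ := hψ.mul_mem h
    obtain ⟨k, hk⟩ := hφ.mul_mem g
    exact ⟨k, fun z hz => by rw [hk z hz, hg z hz, mul_assoc],
      (hφ.isom g k hk).trans (hψ.isom h g hg)⟩

def mulIsometry (hφ : IsInner φ) : H2 →ₗᵢ[ℂ] H2 where
  toFun h := (hφ.mul_mem h).choose
  map_add' f g := ext_eval fun z hz => by
    simp only [eval_add _ _ hz, (hφ.mul_mem _).choose_spec z hz]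
    ring
  map_smul' c f := ext_eval fun z hz => by
    simp only [RingHom.id_apply, eval_smul _ _ hz, (hφ.mul_mem _).choose_spec z hz]
    ring
  norm_map' h := hφ.isom _ _ (hφ.mul_mem h).choose_spec

lemma range_mulIsometry (hφ : IsInner φ) :
    LinearMap.range hφ.mulIsometry.toLinearMap = mulSubmodule φ := by
  ext g
  constructor
  · rintro ⟨h, rfl⟩
    exact ⟨h, (hφ.mul_mem h).choose_spec⟩
  · rintro ⟨h, hh⟩
    exact ⟨h, ext_eval fun z hz => ((hφ.mul_mem h).choose_spec z hz).trans (hh z hz).symm⟩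

lemma isClosed_mulSubmodule (hφ : IsInner φ) : IsClosed (mulSubmodule φ : Set H2) := by
  rw [← hφ.range_mulIsometry, LinearMap.coe_range]
  exact hφ.mulIsometry.isometry.isClosedEmbedding.isClosed_range

lemma orthogonal_Qsp (hφ : IsInner φ) : (Qsp φ)ᗮ = mulSubmodule φ := by
  have : CompleteSpace (mulSubmodule φ) := hφ.isClosed_mulSubmodule.completeSpace_coe
  rw [Qsp_eq_orthogonal, Submodule.orthogonal_orthogonal]

lemma innerDvd_of_mulSubmodule_le (hθ : IsInner θ) (hφ : IsInner φ)
    (hle : mulSubmodule φ ≤ mulSubmodule θ) : InnerDvd θ φ := by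
  have hquot : ∀ h : H2, ∃ g : H2, (∀ z ∈ disc, φ z * H2.eval h z = θ z * H2.eval g z) ∧
      ‖g‖ = ‖h‖ := by
    intro h
    obtain ⟨k, hk⟩ := hφ.mul_mem h
    obtain ⟨g, hg⟩ := hle ⟨h, hk⟩
    exact ⟨g, fun z hz => (hk z hz).symm.trans (hg z hz),
      (hθ.isom g k hg).symm.trans (hφ.isom h k hk)⟩
  obtain ⟨u, hu, -⟩ := hquot one
  have hφu : ∀ z ∈ disc, φ z = θ z * H2.eval u z := fun z hz => by
    simpa [eval_one hz] using hu z hz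
  refine ⟨H2.eval u, mk' fun h => ?_, hφu⟩
  obtain ⟨g, hg, hgn⟩ := hquot h
  refine ⟨g, eqOn_of_mul_eqOn hθ.analyticOnNhd (analyticOnNhd_eval g)
    ((analyticOnNhd_eval u).mul (analyticOnNhd_eval h)) hθ.exists_ne_zero fun z hz => ?_, hgn⟩
  rw [← hg z hz, hφu z hz, mul_assoc]

end IsInner

def shiftCoeff (f : H2) : ℕ → ℂ
  | 0 => 0
  | n + 1 => f n

lemma memℓp_shiftCoeff (f : H2) : Memℓp (shiftCoeff f) 2 := by
  refine memℓp_gen ?_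
  rw [← summable_nat_add_iff 1]
  exact (lp.memℓp f).summable (by norm_num)

def shift (f : H2) : H2 := ⟨shiftCoeff f, memℓp_shiftCoeff f⟩

lemma eval_shift (f : H2) {z : ℂ} (hz : z ∈ disc) : H2.eval (shift f) z = z * H2.eval f z := by
  rw [H2.eval, (summable_coeff_mul_pow (shift f) hz).tsum_eq_zero_add, H2.eval,
    ← tsum_mul_left]
  simp only [shift, shiftCoeff, zero_mul, zero_add, pow_succ]
  exact tsum_congr fun n => by ring

lemma norm_shift (f : H2) : ‖shift f‖ = ‖f‖ := by
  have h2 : (0 : ℝ) < (2 : ℝ≥0∞).toReal := by norm_num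
  rw [lp.norm_eq_tsum_rpow h2, lp.norm_eq_tsum_rpow h2,
    ((lp.memℓp (shift f)).summable h2).tsum_eq_zero_add]
  simp [shift, shiftCoeff]

lemma isInner_id : IsInner fun z => z :=
  IsInner.mk' fun h => ⟨shift h, fun _ hz => eval_shift h hz, norm_shift h⟩

def IsMulOp.toLinearIsometry {φ : ℂ → ℂ} {T : H2 →L[ℂ] H2} (hT : IsMulOp φ T)
    (hφ : IsInner φ) : H2 →ₗᵢ[ℂ] H2 :=
  { T.toLinearMap with norm_map' := hT.norm_map hφ }

section Shift

variable {Mz : H2 →L[ℂ] H2}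

lemma IsMulOp.eval_pow_apply (hMz : IsMulOp (fun z => z) Mz) (n : ℕ) (f : H2) {z : ℂ}
    (hz : z ∈ disc) :
    H2.eval ((hMz.toLinearIsometry isInner_id ^ n) f) z = z ^ n * H2.eval f z := by
  induction n with
  | zero => simp [LinearIsometry.one_def]
  | succ n ih =>
    rw [pow_succ', LinearIsometry.mul_apply]
    change H2.eval (Mz _) z = _
    rw [hMz _ z hz, ih]
    ring

lemma IsMulOp.pow_apply_coeff (hMz : IsMulOp (fun z => z) Mz) (n : ℕ) (f : H2) {k : ℕ}
    (hk : k < n) : (hMz.toLinearIsometry isInner_id ^ n) f k = 0 := by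
  induction n generalizing k with
  | zero => omega
  | succ n ih =>
    rw [pow_succ', LinearIsometry.mul_apply]
    change Mz _ k = 0
    rw [show Mz _ = shift _ from ext_eval fun z hz => by rw [hMz _ z hz, eval_shift _ hz]]
    cases k with
    | zero => rfl
    | succ k => exact ih (by omega)

lemma IsMulOp.isPure (hMz : IsMulOp (fun z => z) Mz) :
    (hMz.toLinearIsometry isInner_id).IsPure := fun x hx =>
  lp.ext <| funext fun k => by
    obtain ⟨y, rfl⟩ := hx (k + 1)
    exact hMz.pow_apply_coeff (k + 1) y k.lt_succ_self

variable {w : H2}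

lemma IsMulOp.eval_linearIsometry (hMz : IsMulOp (fun z => z) Mz)
    (hv : Orthonormal ℂ fun n => (hMz.toLinearIsometry isInner_id ^ n) w) (c : H2) {z : ℂ}
    (hz : z ∈ disc) :
    H2.eval (hv.orthogonalFamily.linearIsometry c) z = H2.eval w z * H2.eval c z := by
  have h := (hv.orthogonalFamily.hasSum_linearIsometry c).mapL (innerSL ℂ (kernel z))
  have hpow : ∀ n, ⟪kernel z, (hMz.toLinearIsometry isInner_id ^ n) w⟫_ℂ = z ^ n * H2.eval w z :=
    fun n => by rw [← eval_eq_inner _ hz, hMz.eval_pow_apply _ _ hz]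
  simp only [LinearIsometry.toSpanSingleton_apply, innerSL_apply_apply, inner_smul_right,
    hpow] at h
  rw [show (fun n => c n * (z ^ n * H2.eval w z)) = fun n => H2.eval w z * (c n * z ^ n) from
    funext fun n => by ring] at h
  rw [eval_eq_inner _ hz]
  exact h.unique ((summable_coeff_mul_pow c hz).hasSum.mul_left _)

lemma IsMulOp.eq_zero_of_mem_wanderingSubspace (hMz : IsMulOp (fun z => z) Mz)
    {N : Submodule ℂ H2} (hMzN : ∀ x ∈ N, Mz x ∈ N)
    (hw : w ∈ (hMz.toLinearIsometry isInner_id).wanderingSubspace N) (hw1 : ‖w‖ = 1)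
    {r : H2} (hr : r ∈ (hMz.toLinearIsometry isInner_id).wanderingSubspace N)
    (hrw : ⟪w, r⟫_ℂ = 0) : r = 0 := by
  by_contra hr0
  set u : H2 := (‖r‖⁻¹ : ℂ) • r
  have hu : u ∈ (hMz.toLinearIsometry isInner_id).wanderingSubspace N := Submodule.smul_mem _ _ hr
  have hu1 : ‖u‖ = 1 := norm_smul_inv_norm hr0
  have hwu : ⟪w, u⟫_ℂ = 0 := by rw [inner_smul_right, hrw, mul_zero]
  have hv := LinearIsometry.orthonormal_pow_apply hMzN hw hw1
  have hv' := LinearIsometry.orthonormal_pow_apply hMzN hu hu1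
  -- Both sides equal `w u`, but they are also orthogonal.
  have hswap : hv.orthogonalFamily.linearIsometry u = hv'.orthogonalFamily.linearIsometry w :=
    ext_eval fun z hz => by
      rw [hMz.eval_linearIsometry hv _ hz, hMz.eval_linearIsometry hv' _ hz, mul_comm]
  have horth : ⟪hv.orthogonalFamily.linearIsometry u, hv'.orthogonalFamily.linearIsometry w⟫_ℂ
      = 0 := by
    refine hv'.inner_linearIsometry_eq_zero (fun j => ?_) w
    rw [← inner_conj_symm, hv.inner_linearIsometry_eq_zero (fun i => ?_) u, map_zero]
    rw [LinearIsometry.inner_pow_apply_pow_apply hMzN hu hw, inner_eq_zero_symm.mp hwu, ite_self]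
  rw [← hswap, inner_self_eq_zero] at horth
  have h1 := congrArg norm horth
  rw [LinearIsometry.norm_map, hu1, _root_.norm_zero] at h1
  exact one_ne_zero h1

theorem IsMulOp.exists_isInner_eq_mulSubmodule (hMz : IsMulOp (fun z => z) Mz)
    {N : Submodule ℂ H2} (hN : IsClosed (N : Set H2)) (hMzN : ∀ x ∈ N, Mz x ∈ N) (hN0 : N ≠ ⊥) :
    ∃ θ : ℂ → ℂ, IsInner θ ∧ N = mulSubmodule θ := by
  obtain ⟨r, hr, hr0⟩ := Submodule.exists_mem_ne_zero_of_ne_bot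
    (hMz.isPure.wanderingSubspace_ne_bot hN hMzN hN0)
  set w : H2 := (‖r‖⁻¹ : ℂ) • r
  have hw : w ∈ (hMz.toLinearIsometry isInner_id).wanderingSubspace N := Submodule.smul_mem _ _ hr
  have hw1 : ‖w‖ = 1 := norm_smul_inv_norm hr0
  have hv := LinearIsometry.orthonormal_pow_apply hMzN hw hw1
  have hrange := hMz.isPure.range_linearIsometry_eq hN hMzN hw
    (fun r hr hrw => hMz.eq_zero_of_mem_wanderingSubspace hMzN hw hw1 hr hrw) hv
  refine ⟨H2.eval w, IsInner.mk' fun h => ⟨hv.orthogonalFamily.linearIsometry h,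
    fun z hz => hMz.eval_linearIsometry hv h hz, LinearIsometry.norm_map _ h⟩, ?_⟩
  rw [← hrange]
  ext g
  constructor
  · rintro ⟨c, rfl⟩
    exact ⟨c, fun z hz => hMz.eval_linearIsometry hv c hz⟩
  · rintro ⟨h, hh⟩
    exact ⟨h, ext_eval fun z hz => (hMz.eval_linearIsometry hv h hz).trans (hh z hz).symm⟩

end Shift

theorem mem_mulSubmodule_of_apply_mem {φ ψ : ℂ → ℂ} (hφ : IsInner φ) (hψ : IsInner ψ)
    (hrp : ∀ r : ℂ → ℂ, IsInner r → InnerDvd r φ → InnerDvd r ψ →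
      ∀ z ∈ disc, ∀ w ∈ disc, r z = r w)
    {Mz : H2 →L[ℂ] H2} (hMz : IsMulOp (fun z => z) Mz)
    {Mψ : H2 →L[ℂ] H2} (hMψ : IsMulOp ψ Mψ)
    {g : H2} (hg : Mψ g ∈ mulSubmodule φ) : g ∈ mulSubmodule φ := by
  set N : Submodule ℂ H2 := (mulSubmodule φ).comap Mψ.toLinearMap
  have hNc : IsClosed (N : Set H2) := hφ.isClosed_mulSubmodule.preimage Mψ.continuous
  have hMzN : ∀ x ∈ N, Mz x ∈ N := fun x hx => by
    have hcomm : Mψ (Mz x) = Mz (Mψ x) := DFunLike.congr_fun (hMψ.commute hMz).eq x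
    change Mψ (Mz x) ∈ mulSubmodule φ
    exact hcomm ▸ hMz.apply_mem_mulSubmodule hx
  have hφN : mulSubmodule φ ≤ N := fun x hx => hMψ.apply_mem_mulSubmodule hx
  obtain ⟨θ, hθ, hNθ⟩ := hMz.exists_isInner_eq_mulSubmodule hNc hMzN
    (ne_bot_of_le_ne_bot hφ.mulSubmodule_ne_bot hφN)
  -- `φ = θ u` and `ψ θ = φ v`, hence `ψ = u v`: `u` is a common inner divisor.
  obtain ⟨u, hu, hφu⟩ := hθ.innerDvd_of_mulSubmodule_le hφ (hNθ ▸ hφN)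
  obtain ⟨v, hv, hψθv⟩ := hφ.innerDvd_of_mulSubmodule_le (hψ.mul hθ) fun x ⟨h, hx⟩ => by
    obtain ⟨k, hk⟩ := hθ.mul_mem h
    have hkN : k ∈ N := hNθ ▸ ⟨h, hk⟩
    rw [show x = Mψ k from ext_eval fun z hz => by rw [hx z hz, hMψ k z hz, hk z hz, mul_assoc]]
    exact hkN
  have hψuv : ∀ z ∈ disc, ψ z = u z * v z :=
    eqOn_of_mul_eqOn hθ.analyticOnNhd hψ.analyticOnNhd (hu.analyticOnNhd.mul hv.analyticOnNhd)
      hθ.exists_ne_zero fun z hz => by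
        rw [mul_comm, show ψ z * θ z = φ z * v z from hψθv z hz, hφu z hz, mul_assoc]
  have hconst := hrp u hu ⟨θ, hθ, fun z hz => (hφu z hz).trans (mul_comm _ _)⟩ ⟨v, hv, hψuv⟩
  have h0 : (0 : ℂ) ∈ disc := Metric.mem_ball_self one_pos
  have hu0 : u 0 ≠ 0 := by
    obtain ⟨z, hz, hφz⟩ := hφ.exists_ne_zero
    rw [hφu z hz, hconst z hz 0 h0] at hφz
    exact right_ne_zero_of_mul hφz
  have hθφ : mulSubmodule θ ≤ mulSubmodule φ := fun x ⟨h, hx⟩ =>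
    ⟨(u 0)⁻¹ • h, fun z hz => by
      rw [hx z hz, eval_smul _ _ hz, hφu z hz, hconst z hz 0 h0, mul_assoc,
        mul_inv_cancel_left₀ hu0]⟩
  exact hθφ (hNθ ▸ hg)

section StarHull

variable (Mz : H2 →L[ℂ] H2) (f : H2)

lemma isClosed_starHull : IsClosed (starHull Mz f : Set H2) := by
  rw [starHull, Submodule.coe_sInf]
  exact isClosed_biInter fun K hK => hK.1

lemma mem_starHull_self : f ∈ starHull Mz f :=
  Submodule.mem_sInf.mpr fun _ hK => hK.2.1

variable {Mz f}

lemma adjoint_mem_starHull {y : H2} (hy : y ∈ starHull Mz f) :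
    Mz.adjoint y ∈ starHull Mz f :=
  Submodule.mem_sInf.mpr fun K hK => hK.2.2 y (Submodule.mem_sInf.mp hy K hK)

lemma starHull_le {K : Submodule ℂ H2} (hK : IsClosed (K : Set H2)) (hf : f ∈ K)
    (hMzK : ∀ y ∈ K, Mz.adjoint y ∈ K) : starHull Mz f ≤ K :=
  sInf_le ⟨hK, hf, hMzK⟩

lemma starHull_le_comap {A : H2 →L[ℂ] H2} (hA : Commute A Mz.adjoint) :
    starHull Mz f ≤ (starHull Mz (A f)).comap A.toLinearMap :=
  starHull_le ((isClosed_starHull Mz (A f)).preimage A.continuous) (mem_starHull_self Mz (A f))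
    fun y hy => by
      have hcomm : A (Mz.adjoint y) = Mz.adjoint (A y) := DFunLike.congr_fun hA.eq y
      change A (Mz.adjoint y) ∈ starHull Mz (A f)
      exact hcomm ▸ adjoint_mem_starHull hy

end StarHull

lemma isClosed_Qsp (φ : ℂ → ℂ) : IsClosed (Qsp φ : Set H2) :=
  Submodule.isClosed_orthogonal _

end Rudin

open Rudin in
theorem stmt2_general (φ ψ : ℂ → ℂ)
    (hφ : IsInner φ) (hψ : IsInner ψ)
    (hrp : ∀ r : ℂ → ℂ, IsInner r → InnerDvd r φ → InnerDvd r ψ →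
      ∀ z ∈ disc, ∀ w ∈ disc, r z = r w)
    (Mz : H2 →L[ℂ] H2) (hMz : IsMulOp (fun z => z) Mz)
    (Mψ : H2 →L[ℂ] H2) (hMψ : IsMulOp ψ Mψ)
    (f : H2) (hf : StarCyclic Mz (Qsp φ) f) :
    StarCyclic Mz (Qsp φ) (ContinuousLinearMap.adjoint Mψ f) := by
  obtain ⟨hfQ, hfH⟩ := hf
  set K := starHull Mz (Mψ.adjoint f)
  have hAfQ : Mψ.adjoint f ∈ Qsp φ := hMψ.adjoint_mem_Qsp hfQ
  have hKQ : K ≤ Qsp φ := starHull_le (isClosed_Qsp φ) hAfQ fun _ => hMz.adjoint_mem_Qsp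
  have hAQ : Qsp φ ≤ K.comap Mψ.adjoint.toLinearMap :=
    hfH ▸ starHull_le_comap (hMψ.commute hMz).star_star
  have : CompleteSpace K := (isClosed_starHull Mz _).completeSpace_coe
  refine ⟨hAfQ, Submodule.eq_of_le_of_orthogonal_inf_eq_bot hKQ <|
    (Submodule.eq_bot_iff _).mpr fun r ⟨hrK, hrQ⟩ => ?_⟩
  have hψr : Mψ r ∈ mulSubmodule φ := by
    rw [← hφ.orthogonal_Qsp]
    intro u hu
    rw [← ContinuousLinearMap.adjoint_inner_left]
    exact hrK _ (hAQ hu)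
  have hr := mem_mulSubmodule_of_apply_mem hφ hψ hrp hMz hMψ hψr
  rw [Qsp_eq_orthogonal] at hrQ
  exact inner_self_eq_zero.mp (hrQ r hr)

open Rudin in
/-- Let `φ` and `ψ` be non-constant relatively prime inner functions.
If `f` is a star-cyclic vector of `Q_φ`, then so is `M_ψ* f`. -/
theorem stmt2 (φ ψ : ℂ → ℂ)
    (hφ : IsInner φ) (hψ : IsInner ψ)
    (hφnc : ∃ z ∈ disc, ∃ w ∈ disc, φ z ≠ φ w)
    (hψnc : ∃ z ∈ disc, ∃ w ∈ disc, ψ z ≠ ψ w)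
    (hrp : ∀ r : ℂ → ℂ, IsInner r → InnerDvd r φ → InnerDvd r ψ →
      ∀ z ∈ disc, ∀ w ∈ disc, r z = r w)
    (Mz : H2 →L[ℂ] H2) (hMz : IsMulOp (fun z => z) Mz)
    (Mψ : H2 →L[ℂ] H2) (hMψ : IsMulOp ψ Mψ)
    (f : H2) (hf : StarCyclic Mz (Qsp φ) f) :
    StarCyclic Mz (Qsp φ) (ContinuousLinearMap.adjoint Mψ f) :=
  stmt2_general φ ψ hφ hψ hrp Mz hMz Mψ hMψ f hf
end
end

section
/- Let T = (T_1, …, T_n) be a commuting tuple of bounded linear operators on a separable complex Hilbert space H, and let Q ⊆ H be a closed subspace invariant under each adjoint T_i*. Then rank(P_Q T_1|_Q, …, P_Q T_n|_Q) ≤ rank(T_1, …, T_n), where P_Q is the orthogonal projection of H onto Q. -/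
/-! If `[S]_T = H`, then `[P S]` for the compressed tuple is all of `Q`: since `Qᗮ` is
`T i`-invariant and `P` kills `Qᗮ`, we have `P T i = (P T i P) P`, so `P` carries the
closed `T`-invariant hull of `S` into the closed hull of `P S` for the compression, and `P`
maps `H` onto `Q`. Hence every generating set `S` of `T` yields the generating set `P S`
of the compression, of no larger cardinality. -/

noncomputable section

namespace Rudin

/-- `[S]_T`: the smallest closed subspace containing `S` and invariant under every `T i`. -/
def genHull {H : Type*} [NormedAddCommGroup H] [InnerProductSpace ℂ H] {ι : Type*}
    (T : ι → (H →L[ℂ] H)) (S : Set H) : Submodule ℂ H :=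
  sInf {K : Submodule ℂ H | IsClosed (K : Set H) ∧ S ⊆ K ∧ ∀ i, ∀ x ∈ K, T i x ∈ K}

/-- The rank of the tuple `T` acting on the (closed, jointly invariant) subspace `Q`:
the least cardinality of a subset `S ⊆ Q` with `[S]_T = Q`. -/
def rankIn {H : Type*} [NormedAddCommGroup H] [InnerProductSpace ℂ H] {ι : Type*}
    (T : ι → (H →L[ℂ] H)) (Q : Submodule ℂ H) : ℕ∞ :=
  sInf {m : ℕ∞ | ∃ S : Set H, S ⊆ (Q : Set H) ∧ S.encard = m ∧ genHull T S = Q}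

section genHull

variable {H : Type*} [NormedAddCommGroup H] [InnerProductSpace ℂ H] {ι : Type*}
  {T : ι → (H →L[ℂ] H)} {S : Set H}

lemma genHull_le {K : Submodule ℂ H} (hK : IsClosed (K : Set H)) (hSK : S ⊆ K)
    (hTK : ∀ i, ∀ x ∈ K, T i x ∈ K) : genHull T S ≤ K :=
  sInf_le ⟨hK, hSK, hTK⟩

lemma subset_genHull : S ⊆ genHull T S := fun _ hs =>
  Submodule.mem_sInf.2 fun _ hK => hK.2.1 hs

lemma isClosed_genHull : IsClosed (genHull T S : Set H) := by
  rw [genHull, Submodule.coe_sInf]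
  exact isClosed_biInter fun _ hK => hK.1

lemma apply_mem_genHull (i : ι) {x : H} (hx : x ∈ genHull T S) : T i x ∈ genHull T S :=
  Submodule.mem_sInf.2 fun K hK => hK.2.2 i x (Submodule.mem_sInf.1 hx K hK)

end genHull

section intertwining

variable {H H' : Type*} [NormedAddCommGroup H] [InnerProductSpace ℂ H]
  [NormedAddCommGroup H'] [InnerProductSpace ℂ H'] {ι : Type*}
  {T : ι → (H →L[ℂ] H)} {T' : ι → (H' →L[ℂ] H')} (f : H →L[ℂ] H')

lemma genHull_le_comap_genHull_image (hf : ∀ i x, f (T i x) = T' i (f x)) (S : Set H) :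
    genHull T S ≤ (genHull T' (f '' S)).comap (f : H →ₗ[ℂ] H') :=
  genHull_le (isClosed_genHull.preimage f.continuous)
    (fun s hs => subset_genHull (Set.mem_image_of_mem f hs))
    (fun i x hx => by
      simpa only [Submodule.mem_comap, ContinuousLinearMap.coe_coe, hf] using
        apply_mem_genHull i hx)

lemma rankIn_le_rankIn_top_of_intertwining (hf : ∀ i x, f (T i x) = T' i (f x))
    {Q : Submodule ℂ H'} (hQ : IsClosed (Q : Set H'))
    (hrange : LinearMap.range (f : H →ₗ[ℂ] H') = Q) :
    rankIn T' Q ≤ rankIn T ⊤ := by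
  have hmem : ∀ x, f x ∈ Q := fun x => hrange ▸ LinearMap.mem_range_self _ x
  refine le_sInf ?_
  rintro _ ⟨S, -, rfl, hS⟩
  have hhull : genHull T' (f '' S) = Q := by
    refine le_antisymm (genHull_le hQ (Set.image_subset_iff.2 fun x _ => hmem x) ?_) ?_
    · intro i x hx
      obtain ⟨y, rfl⟩ := LinearMap.mem_range.1 (hrange ▸ hx)
      simpa only [ContinuousLinearMap.coe_coe, ← hf] using hmem (T i y)
    · intro x hx
      obtain ⟨y, rfl⟩ := LinearMap.mem_range.1 (hrange ▸ hx)
      exact genHull_le_comap_genHull_image f hf S (hS ▸ Submodule.mem_top)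
  calc rankIn T' Q ≤ (f '' S).encard :=
        sInf_le ⟨f '' S, hhull ▸ subset_genHull, rfl, hhull⟩
    _ ≤ S.encard := Set.encard_image_le _ _

end intertwining

section projection

variable {H : Type*} [NormedAddCommGroup H] [InnerProductSpace ℂ H]

def IsOrthogonalProjectionOnto (P : H →L[ℂ] H) (Q : Submodule ℂ H) : Prop :=
  ∀ x : H, P x ∈ Q ∧ x - P x ∈ Qᗮ

variable {Q : Submodule ℂ H} {P : H →L[ℂ] H}

namespace IsOrthogonalProjectionOnto

lemma apply_eq_self (hP : IsOrthogonalProjectionOnto P Q) {x : H} (hx : x ∈ Q) : P x = x := by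
  have h : x - P x = 0 :=
    Submodule.disjoint_def.1 Q.orthogonal_disjoint _ (Q.sub_mem hx (hP x).1) (hP x).2
  exact (sub_eq_zero.1 h).symm

lemma apply_eq_zero (hP : IsOrthogonalProjectionOnto P Q) {y : H} (hy : y ∈ Qᗮ) : P y = 0 := by
  have h : P y ∈ Qᗮ := by simpa using Qᗮ.sub_mem hy (hP y).2
  exact Submodule.disjoint_def.1 Q.orthogonal_disjoint _ (hP y).1 h

lemma range_eq (hP : IsOrthogonalProjectionOnto P Q) : LinearMap.range (P : H →ₗ[ℂ] H) = Q :=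
  le_antisymm (LinearMap.range_le_iff_comap.2 (eq_top_iff.2 fun x _ => (hP x).1))
    fun x hx => ⟨x, hP.apply_eq_self hx⟩

lemma apply_comp_eq_compression_apply (hP : IsOrthogonalProjectionOnto P Q) {A : H →L[ℂ] H}
    (hA : Qᗮ ∈ Module.End.invtSubmodule (A : H →ₗ[ℂ] H)) (x : H) :
    P (A x) = (P ∘L A ∘L P) (P x) := by
  have hperp : P (A (x - P x)) = 0 := hP.apply_eq_zero (hA (hP x).2)
  rw [map_sub, map_sub, sub_eq_zero] at hperp
  simp only [ContinuousLinearMap.comp_apply, hP.apply_eq_self (hP x).1, hperp]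

end IsOrthogonalProjectionOnto

end projection

end Rudin

open Rudin in
theorem stmt6_general {H : Type*} [NormedAddCommGroup H] [InnerProductSpace ℂ H]
    [CompleteSpace H]
    (n : ℕ) (T : Fin n → (H →L[ℂ] H))
    (Q : Submodule ℂ H) (hQc : IsClosed (Q : Set H))
    (hQinv : ∀ i : Fin n, ∀ x ∈ Q, ContinuousLinearMap.adjoint (T i) x ∈ Q)
    (P : H →L[ℂ] H)
    (hP : ∀ x : H, P x ∈ Q ∧ x - P x ∈ Qᗮ) :
    rankIn (fun i => P ∘L T i ∘L P) Q ≤ rankIn T (⊤ : Submodule ℂ H) :=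
  rankIn_le_rankIn_top_of_intertwining P
    (fun i => IsOrthogonalProjectionOnto.apply_comp_eq_compression_apply hP
      (ContinuousLinearMap.orthogonal_mem_invtSubmodule (hQinv i)))
    hQc (IsOrthogonalProjectionOnto.range_eq hP)

open Rudin in
/-- Let `T = (T 1, …, T n)` be a commuting tuple of bounded operators
on a separable complex Hilbert space `H` and let `Q` be a closed subspace invariant
under each `T i *`.  Then the rank of the compressed tuple `(P_Q T i|_Q)` (acting on
`Q`) is at most the rank of `T`.  Here `P` is the orthogonal projection onto `Q`. -/
theorem stmt6 {H : Type*} [NormedAddCommGroup H] [InnerProductSpace ℂ H]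
    [CompleteSpace H] [TopologicalSpace.SeparableSpace H]
    (n : ℕ) (T : Fin n → (H →L[ℂ] H))
    (hcomm : ∀ i j : Fin n, ∀ x : H, T i (T j x) = T j (T i x))
    (Q : Submodule ℂ H) (hQc : IsClosed (Q : Set H))
    (hQinv : ∀ i : Fin n, ∀ x ∈ Q, ContinuousLinearMap.adjoint (T i) x ∈ Q)
    (P : H →L[ℂ] H)
    (hP : ∀ x : H, P x ∈ Q ∧ x - P x ∈ Qᗮ) :
    rankIn (fun i => P ∘L T i ∘L P) Q ≤ rankIn T (⊤ : Submodule ℂ H) :=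
  stmt6_general n T Q hQc hQinv P hP
end
end
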